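/- arXiv:1905.04721 — 6 statements merged into one kernel-verified Lean document; each statement's English description precedes it below -/
import Mathlib

section
/- Let (𝒱, J) be an essentially small site and let (ℬ, F) be a base for 𝒱, i.e. ℬ is an essentially small category and F : ℬ → 𝒱 is a faithful functor satisfying property (⋆). Then the assignment sending each object B of ℬ to the collection of those sieves S on B whose pushforward sieve along F (the smallest sieve on F(B) containing F(s) for every morphism s belonging to S) is a J-covering sieve of F(B), defines a Grothendieck topology on ℬ (called the F-induced topology). -/
open CategoryTheory

universe u

/-- Property (⋆) of Beilinson for families of pairs indexed by `Fin n`: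
for every object `X` of `V` and every finite family of pairs `(Bo α, f α)` with
`f α : X ⟶ F.obj (Bo α)`, there exist objects `B' β` of `B` and morphisms
`g β : F.obj (B' β) ⟶ X` generating a `J`-covering sieve of `X`, such that every
composite `g β ≫ f α` is the image under `F` of a morphism `B' β ⟶ Bo α`. -/
def StarPropertyOn {B V : Type u} [SmallCategory B] [SmallCategory V]
    (F : B ⥤ V) (J : GrothendieckTopology V) (n : ℕ) : Prop :=
  ∀ (X : V) (Bo : Fin n → B) (f : ∀ α, X ⟶ F.obj (Bo α)),
    ∃ (ι : Type u) (B' : ι → B) (g : ∀ β, F.obj (B' β) ⟶ X),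
      Sieve.ofArrows (fun β => F.obj (B' β)) g ∈ J X ∧
      ∀ (α : Fin n) (β : ι), ∃ h : B' β ⟶ Bo α, F.map h = g β ≫ f α

/-- Property (⋆): the above for all finite families. -/
def StarProperty {B V : Type u} [SmallCategory B] [SmallCategory V]
    (F : B ⥤ V) (J : GrothendieckTopology V) : Prop :=
  ∀ n : ℕ, StarPropertyOn F J n

/-!
Stability under pullback is the only axiom that needs the hypotheses on `F`. Given
`h : Y ⟶ X` in `B` and an arrow `f : Z ⟶ F Y` with `f ≫ F h = e ≫ F u` for some `u ∈ S`,
property (⋆) for the pair `(e, f)` covers `Z` by arrows `g : F B' ⟶ Z` along which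
`g ≫ e = F k` and `g ≫ f = F l`. Then `F (l ≫ h) = F (k ≫ u)`, so faithfulness gives
`l ≫ h = k ≫ u ∈ S`, i.e. `l ∈ S.pullback h`; hence `g ≫ f` lies in the pushforward of
`S.pullback h`. Identity and transitivity hold for the pushforward of any functor.
-/

namespace CategoryTheory.Sieve

variable {B V : Type*} [Category B] [Category V] (F : B ⥤ V) (J : GrothendieckTopology V)

theorem functorPushforward_mem_of_forall_pullback_mem {X : B} {S R : Sieve X}
    (hS : S.functorPushforward F ∈ J (F.obj X))
    (hR : ∀ ⦃Y : B⦄ ⦃u : Y ⟶ X⦄, S u → (R.pullback u).functorPushforward F ∈ J (F.obj Y)) :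
    R.functorPushforward F ∈ J (F.obj X) := by
  refine J.transitive hS _ ?_
  rintro Z _ ⟨Y, u, e, hu, rfl⟩
  rw [Sieve.pullback_comp]
  exact J.pullback_stable e (J.superset_covering (functorPushforward_pullback_le F u R) (hR hu))

end CategoryTheory.Sieve

namespace StarPropertyOn

variable {B V : Type u} [SmallCategory B] [SmallCategory V]
  {F : B ⥤ V} {J : GrothendieckTopology V}

theorem exists_ofArrows_mem_lift_pair (hF : StarPropertyOn F J 2) {X : V} {B₁ B₂ : B}
    (f₁ : X ⟶ F.obj B₁) (f₂ : X ⟶ F.obj B₂) :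
    ∃ (ι : Type u) (B' : ι → B) (g : ∀ β, F.obj (B' β) ⟶ X),
      Sieve.ofArrows (fun β => F.obj (B' β)) g ∈ J X ∧
      ∀ β, (∃ k : B' β ⟶ B₁, F.map k = g β ≫ f₁) ∧ ∃ l : B' β ⟶ B₂, F.map l = g β ≫ f₂ := by
  obtain ⟨ι, B', g, hcov, hlift⟩ := hF X ![B₁, B₂] (Fin.cons f₁ (Fin.cons f₂ finZeroElim))
  exact ⟨ι, B', g, hcov, fun β => ⟨hlift 0 β, hlift 1 β⟩⟩

theorem functorPushforward_pullback_mem [F.Faithful] (hF : StarPropertyOn F J 2)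
    {X Y : B} (h : Y ⟶ X) {S : Sieve X} (hS : S.functorPushforward F ∈ J (F.obj X)) :
    (S.pullback h).functorPushforward F ∈ J (F.obj Y) := by
  refine J.transitive (J.pullback_stable (F.map h) hS) _ ?_
  rintro Z f ⟨C, u, e, hu, hfac⟩
  obtain ⟨ι, B', g, hcov, hlift⟩ := hF.exists_ofArrows_mem_lift_pair e f
  refine J.superset_covering ?_ hcov
  rw [Sieve.ofArrows, Sieve.generate_le_iff, Presieve.ofArrows_le_iff]
  intro β
  obtain ⟨⟨k, hk⟩, ⟨l, hl⟩⟩ := hlift β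
  have hlh : l ≫ h = k ≫ u := F.map_injective <| by
    rw [F.map_comp, F.map_comp, hk, hl, Category.assoc, Category.assoc, hfac]
  have hl_mem : S.pullback h l := by
    rw [Sieve.pullback_apply, hlh]
    exact S.downward_closed hu k
  exact ⟨B' β, l, 𝟙 _, hl_mem, by rw [Category.id_comp, hl]⟩

def inducedTopology [F.Faithful] (hF : StarPropertyOn F J 2) : GrothendieckTopology B where
  sieves X := {S | S.functorPushforward F ∈ J (F.obj X)}
  top_mem' X := by simp
  pullback_stable' _ _ _ h hS := hF.functorPushforward_pullback_mem h hS
  transitive' _ _ hS _ hR := Sieve.functorPushforward_mem_of_forall_pullback_mem F J hS hR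

theorem mem_inducedTopology_iff [F.Faithful] (hF : StarPropertyOn F J 2) {X : B}
    (S : Sieve X) : S ∈ hF.inducedTopology X ↔ S.functorPushforward F ∈ J (F.obj X) :=
  Iff.rfl

end StarPropertyOn

/-- If `(B, F)` is a base for the site `(V, J)` (i.e. `F` is faithful and satisfies
property (⋆)), then declaring a sieve `S` on `B` to be covering when its pushforward
along `F` is `J`-covering defines a Grothendieck topology on `B`. -/
theorem induced_topology_exists {B V : Type u} [SmallCategory B] [SmallCategory V]
    (J : GrothendieckTopology V) (F : B ⥤ V) [F.Faithful]
    (hF : StarProperty F J) :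
    ∃ K : GrothendieckTopology B,
      ∀ (X : B) (S : Sieve X), S ∈ K X ↔ S.functorPushforward F ∈ J (F.obj X) :=
  ⟨(hF 2).inducedTopology, fun _ => (hF 2).mem_inducedTopology_iff⟩
end

section
/- Let (𝒱, J) be an essentially small site and let (ℬ, F) be a base for 𝒱, and equip ℬ with the F-induced topology. Then F is continuous: for every J-sheaf of sets 𝒢 on 𝒱, the presheaf on ℬ given by B ↦ 𝒢(F(B)) (i.e. the composition of 𝒢 with F^op) is a sheaf for the F-induced topology on ℬ. -/
open CategoryTheory

universe u

/-!
Property (⋆) for the empty family says that `F` is cover-dense, and for the two pairs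
`(U, 𝟙)`, `(W, f)` with `f : F U ⟶ F W` it says that `F` is locally full; a faithful functor is locally faithful.
Since the induced topology is by definition the one for which covers are detected after applying
`F`, `F` exhibits `B` as a dense subsite of `V`, and dense subsite inclusions are continuous.
-/

namespace StarPropertyOn

variable {B V : Type u} [SmallCategory B] [SmallCategory V] {F : B ⥤ V}
  {J : GrothendieckTopology V}

lemma isCoverDense (hF : StarPropertyOn F J 0) : F.IsCoverDense J where
  is_cover X := by
    obtain ⟨ι, B', g, hcov, -⟩ := hF X Fin.elim0 (fun α => α.elim0)
    refine J.superset_covering ?_ hcov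
    rw [Sieve.ofArrows, Sieve.generate_le_iff]
    rintro Y f ⟨β⟩
    exact Presieve.in_coverByImage F (g β)

lemma isLocallyFull (hF : StarPropertyOn F J 2) : F.IsLocallyFull J where
  functorPushforward_imageSieve_mem {U W} f := by
    obtain ⟨ι, B', g, hcov, hfac⟩ :=
      hF (F.obj U) ![U, W] (Fin.cons (𝟙 (F.obj U)) (Fin.cons f finZeroElim))
    refine J.superset_covering ?_ hcov
    rw [Sieve.ofArrows, Sieve.generate_le_iff]
    rintro Y q ⟨β⟩
    obtain ⟨h₀, hh₀⟩ := hfac 0 β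
    obtain ⟨h₁, hh₁⟩ := hfac 1 β
    have hh₀ : F.map h₀ = g β := hh₀.trans (Category.comp_id _)
    have hh₁ : F.map h₁ = F.map h₀ ≫ f := hh₁.trans (by rw [hh₀]; rfl)
    exact ⟨B' β, h₀, 𝟙 _, ⟨h₁, hh₁⟩, by simpa using hh₀.symm⟩

end StarPropertyOn

lemma StarProperty.isDenseSubsite {B V : Type u} [SmallCategory B] [SmallCategory V]
    {F : B ⥤ V} [F.Faithful] {J : GrothendieckTopology V} (hF : StarProperty F J)
    {K : GrothendieckTopology B}
    (hK : ∀ (X : B) (S : Sieve X), S ∈ K X ↔ S.functorPushforward F ∈ J (F.obj X)) :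
    F.IsDenseSubsite K J where
  isCoverDense' := (hF 0).isCoverDense
  isLocallyFull' := (hF 2).isLocallyFull
  functorPushforward_mem_iff {X S} := (hK X S).symm

/-- If `(B, F)` is a base for the site `(V, J)` and `K` is the `F`-induced topology on `B`,
then `F` is continuous: composition with `F` sends `J`-sheaves of sets to `K`-sheaves. -/
theorem induced_topology_continuous {B V : Type u} [SmallCategory B] [SmallCategory V]
    (J : GrothendieckTopology V) (F : B ⥤ V) [F.Faithful]
    (hF : StarProperty F J)
    (K : GrothendieckTopology B)
    (hK : ∀ (X : B) (S : Sieve X), S ∈ K X ↔ S.functorPushforward F ∈ J (F.obj X))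
    (G : Vᵒᵖ ⥤ Type u) (hG : Presheaf.IsSheaf J G) :
    Presheaf.IsSheaf K (F.op ⋙ G) := by
  have := hF.isDenseSubsite hK
  exact F.op_comp_isSheaf_of_isSheaf K J G hG
end

section
/- Let (𝒱, J) be an essentially small site and let (ℬ, F) be a base for 𝒱, and equip ℬ with the F-induced topology. Then F induces an equivalence of topoi: the functor from the category of sheaves of sets on (𝒱, J) to the category of sheaves of sets on ℬ with the F-induced topology, sending a sheaf 𝒢 to the sheaf B ↦ 𝒢(F(B)) (composition with F^op), is an equivalence of categories. -/
open CategoryTheory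

universe u

/-- Composition with `F.op`, as a functor from `J`-sheaves of sets to `K`-sheaves of sets,
given the fact `hc` that composition with `F.op` preserves the sheaf condition. -/
def compSheafFunctor {B V : Type u} [SmallCategory B] [SmallCategory V]
    (J : GrothendieckTopology V) (K : GrothendieckTopology B) (F : B ⥤ V)
    (hc : ∀ G : Sheaf J (Type u), Presheaf.IsSheaf K (F.op ⋙ G.val)) :
    Sheaf J (Type u) ⥤ Sheaf K (Type u) where
  obj G := ⟨F.op ⋙ G.val, hc G⟩
  map η := ⟨Functor.whiskerLeft F.op η.hom⟩

/-!
Property (⋆) makes `F` a dense subsite of `(V, J)`: the empty family shows that every object of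
`V` is covered by objects in the image of `F` (cover density), and the family `(𝟙, f)` shows that
every `f : F U ⟶ F W` lifts to `B` locally on `F U` (local fullness); local faithfulness is
faithfulness. Since the induced topology is exactly the one whose covers push forward to
`J`-covers, the comparison lemma identifies sheaves on the two sites.
-/

namespace CategoryTheory.Functor

variable {B V : Type u} [SmallCategory B] [SmallCategory V] {F : B ⥤ V}
  {J : GrothendieckTopology V}

theorem isCoverDense_of_starPropertyOn_zero (hF : StarPropertyOn F J 0) : F.IsCoverDense J where
  is_cover X := by
    obtain ⟨ι, B', g, hg, -⟩ := hF X Fin.elim0 fun α => α.elim0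
    refine J.superset_covering ((Sieve.generate_le_iff _ _).2 ?_) hg
    exact Presieve.ofArrows_le_iff.2 fun β => Presieve.in_coverByImage F (g β)

theorem isLocallyFull_of_starPropertyOn_two (hF : StarPropertyOn F J 2) : F.IsLocallyFull J where
  functorPushforward_imageSieve_mem {U W} f := by
    let Bo : Fin 2 → B := Fin.cons U fun _ => W
    obtain ⟨ι, B', g, hg, hlift⟩ :=
      hF (F.obj U) Bo (Fin.cons (α := fun α => F.obj U ⟶ F.obj (Bo α)) (𝟙 _) fun _ => f)
    refine J.superset_covering ((Sieve.generate_le_iff _ _).2 ?_) hg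
    refine Presieve.ofArrows_le_iff.2 fun β => ?_
    obtain ⟨i, hi⟩ : ∃ i : B' β ⟶ U, F.map i = g β ≫ 𝟙 _ := hlift 0 β
    obtain ⟨l, hl⟩ : ∃ l : B' β ⟶ W, F.map l = g β ≫ f := hlift 1 β
    rw [Category.comp_id] at hi
    exact ⟨B' β, i, 𝟙 _, ⟨l, by rw [hl, hi]⟩, by rw [hi, Category.id_comp]⟩

theorem isDenseSubsite_of_starProperty [F.Faithful] (hF : StarProperty F J)
    {K : GrothendieckTopology B}
    (hK : ∀ (X : B) (S : Sieve X), S ∈ K X ↔ S.functorPushforward F ∈ J (F.obj X)) :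
    F.IsDenseSubsite K J where
  isCoverDense' := isCoverDense_of_starPropertyOn_zero (hF 0)
  isLocallyFull' := isLocallyFull_of_starPropertyOn_two (hF 2)
  functorPushforward_mem_iff {X S} := (hK X S).symm

end CategoryTheory.Functor

/-- If `(B, F)` is a base for the site `(V, J)` and `K` is the `F`-induced topology on `B`,
then the functor "composition with `F`" from sheaves of sets on `(V, J)` to sheaves of sets
on `(B, K)` is an equivalence of categories. -/
theorem induced_topology_sheaf_equivalence {B V : Type u} [SmallCategory B] [SmallCategory V]
    (J : GrothendieckTopology V) (F : B ⥤ V) [F.Faithful]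
    (hF : StarProperty F J)
    (K : GrothendieckTopology B)
    (hK : ∀ (X : B) (S : Sieve X), S ∈ K X ↔ S.functorPushforward F ∈ J (F.obj X)) :
    ∃ hc : ∀ G : Sheaf J (Type u), Presheaf.IsSheaf K (F.op ⋙ G.val),
      (compSheafFunctor J K F hc).IsEquivalence := by
  have := F.isDenseSubsite_of_starProperty hF hK
  exact ⟨fun G => F.op_comp_isSheaf K J G,
    inferInstanceAs (F.sheafPushforwardContinuous (Type u) K J).IsEquivalence⟩
end

section
/- Let (𝒱, J) be an essentially small site, let ℬ be an essentially small category admitting finite products, and let F : ℬ → 𝒱 be a faithful functor commuting with finite products. If the condition of property (⋆) holds for every family of pairs (B_α, f_α) having at most one element, then F satisfies property (⋆) for all finite families. -/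
open CategoryTheory

universe u

/-- If `B` admits finite products and the faithful functor `F` commutes with finite
products, then property (⋆) for families with at most one element implies property (⋆)
for all finite families. -/
theorem star_of_star_le_one {B V : Type u} [SmallCategory B] [SmallCategory V]
    (J : GrothendieckTopology V) (F : B ⥤ V) [F.Faithful]
    [Limits.HasFiniteProducts B] [Limits.PreservesFiniteProducts F]
    (h : ∀ n ≤ 1, StarPropertyOn F J n) :
    StarProperty F J := by
  intro n X Bo f
  have hP : Limits.HasProduct Bo := inferInstance
  let P : B := ∏ᶜ Bo
  have isLim : Limits.IsLimit (F.mapCone (Limits.limit.cone (Discrete.functor Bo))) :=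
    Limits.isLimitOfPreserves F (Limits.limit.isLimit _)
  let c : Limits.Cone (Discrete.functor Bo ⋙ F) :=
    { pt := X, π := Discrete.natTrans (fun ⟨α⟩ => f α) }
  let f' : X ⟶ F.obj P := isLim.lift c
  have hf' : ∀ α, f' ≫ F.map (Limits.Pi.π Bo α) = f α := fun α => isLim.fac c ⟨α⟩
  obtain ⟨ι, B', g, hcov, hh⟩ := h 1 le_rfl X (fun _ => P) (fun _ => f')
  refine ⟨ι, B', g, hcov, fun α β => ?_⟩
  obtain ⟨k, hk⟩ := hh 0 β
  exact ⟨k ≫ Limits.Pi.π Bo α, by rw [F.map_comp, hk, Category.assoc, hf']⟩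
end

section
/- Let (𝒱, J) be an essentially small site, let ℬ be an essentially small category and let F : ℬ → 𝒱 be a faithful functor. If the condition of property (⋆) holds for every family of pairs (B_α, f_α) having at most two elements, then F satisfies property (⋆) for all finite families. -/
open CategoryTheory

universe u

/-- For a faithful functor `F` into a site `(V, J)`, property (⋆) for families with at
most two elements implies property (⋆) for all finite families. -/
theorem star_of_star_le_two {B V : Type u} [SmallCategory B] [SmallCategory V]
    (J : GrothendieckTopology V) (F : B ⥤ V) [F.Faithful]
    (h : ∀ n ≤ 2, StarPropertyOn F J n) :
    StarProperty F J := by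

  intro n
  induction n with
  | zero => exact h 0 (by omega)
  | succ m IH =>
    by_cases hm : m + 1 ≤ 2
    · exact h _ hm
    · intro X Bo f
      obtain ⟨ι, B', g, hg, hfac⟩ := IH X (fun α => Bo α.castSucc) (fun α => f α.castSucc)
      have h2 := h 2 le_rfl
      choose ι' B'' g' hg' hfac' using fun β : ι =>
        h2 (F.obj (B' β)) (fun α : Fin 2 => if α = 0 then B' β else Bo (Fin.last m))
          (fun α : Fin 2 => by
            by_cases hα : α = 0
            · subst hα; exact eqToHom (by simp) ≫ 𝟙 (F.obj (B' β)) ≫ eqToHom (by simp)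
            · exact eqToHom (by simp) ≫ (g β ≫ f (Fin.last m)) ≫ eqToHom (by simp [hα]))
      refine ⟨Σ β : ι, ι' β, fun p => B'' p.1 p.2, fun p => g' p.1 p.2 ≫ g p.1, ?_, ?_⟩
      · apply J.transitive hg
        intro Y t ht
        obtain ⟨Z, u, v, hv, rfl⟩ := ht
        cases hv with
        | mk β =>
          rw [Sieve.pullback_comp]
          apply J.pullback_stable
          apply J.superset_covering _ (hg' β)
          intro Y' t' ht'
          obtain ⟨Z', u', v', hv', rfl⟩ := ht'
          cases hv' with
          | mk γ =>
            refine ⟨F.obj (B'' β γ), u', g' β γ ≫ g β, ?_, by simp⟩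
            exact Presieve.ofArrows.mk (⟨β, γ⟩ : Σ β : ι, ι' β)
      · intro α p
        obtain ⟨β, γ⟩ := p
        refine Fin.lastCases ?_ ?_ α
        · obtain ⟨h1, hh1⟩ := hfac' β 1 γ
          refine ⟨h1 ≫ eqToHom (by simp), ?_⟩
          simp only [Functor.map_comp, hh1]
          simp
        · intro α'
          obtain ⟨h0, hh0⟩ := hfac' β 0 γ
          obtain ⟨hα, hhα⟩ := hfac α' β
          refine ⟨(h0 ≫ eqToHom (by simp)) ≫ hα, ?_⟩
          simp only [Functor.map_comp, hh0, hhα]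
          simp
end

section
/- Let (𝒱, J) be an essentially small site, let (ℬ, F) be a base for (𝒱, J), equip ℬ with the F-induced topology, and let (ℬ′, F′) be a base for ℬ with this induced topology. Then (ℬ′, F ∘ F′) is a base for (𝒱, J): the composite F ∘ F′ is faithful and satisfies property (⋆) with respect to J; moreover the (F ∘ F′)-induced topology on ℬ′ coincides with the F′-induced topology coming from the F-induced topology on ℬ. -/
open CategoryTheory

universe u

/-- If `(B, F)` is a base for `(V, J)`, `K` is the `F`-induced topology on `B`, and
`(B', F')` is a base for `(B, K)`, then `(B', F ∘ F')` is a base for `(V, J)`: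
`F' ⋙ F` is faithful and satisfies property (⋆), and the `(F' ⋙ F)`-induced topology
on `B'` coincides with the `F'`-induced topology coming from `K`. -/
theorem base_comp_base {B' B V : Type u}
    [SmallCategory B'] [SmallCategory B] [SmallCategory V]
    (J : GrothendieckTopology V) (F : B ⥤ V) [F.Faithful] (hF : StarProperty F J)
    (K : GrothendieckTopology B)
    (hK : ∀ (X : B) (S : Sieve X), S ∈ K X ↔ S.functorPushforward F ∈ J (F.obj X))
    (F' : B' ⥤ B) [F'.Faithful] (hF' : StarProperty F' K) :
    (F' ⋙ F).Faithful ∧ StarProperty (F' ⋙ F) J ∧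
      ∀ (X : B') (S : Sieve X),
        S.functorPushforward (F' ⋙ F) ∈ J (F.obj (F'.obj X)) ↔
          S.functorPushforward F' ∈ K (F'.obj X) := by
  refine ⟨Functor.Faithful.comp F' F, ?_, ?_⟩
  · intro n X Bo f
    obtain ⟨ι, B'', g, hg, hcomp⟩ := hF n X (fun α => F'.obj (Bo α)) f
    choose h hh using hcomp
    have hstep : ∀ β : ι, ∃ (ι' : Type u) (C : ι' → B')
        (g' : ∀ γ, F'.obj (C γ) ⟶ B'' β),
        Sieve.ofArrows (fun γ => F'.obj (C γ)) g' ∈ K (B'' β) ∧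
        ∀ (α : Fin n) (γ : ι'), ∃ h' : C γ ⟶ Bo α, F'.map h' = g' γ ≫ h α β := by
      intro β
      exact hF' n (B'' β) Bo (fun α => h α β)
    choose ι' C g' hcov hcomp' using hstep
    refine ⟨Σ β : ι, ι' β, fun p => C p.1 p.2,
      fun p => F.map (g' p.1 p.2) ≫ g p.1, ?_, ?_⟩
    · apply J.transitive hg
      intro Y e he
      rw [Sieve.mem_ofArrows_iff] at he
      obtain ⟨β, w, rfl⟩ := he
      have hpush : (Sieve.ofArrows (fun γ => F'.obj (C β γ))
          (g' β)).functorPushforward F ∈ J (F.obj (B'' β)) :=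
        (hK _ _).mp (hcov β)
      refine J.superset_covering ?_ (J.pullback_stable w hpush)
      intro Z v hv
      obtain ⟨Y₀, t, a, ht, hfac⟩ := hv
      rw [Sieve.mem_ofArrows_iff] at ht
      obtain ⟨γ, w', rfl⟩ := ht
      simp only [Sieve.pullback_apply]
      have : (a ≫ F.map w') ≫ (F.map (g' β γ) ≫ g β) = v ≫ w ≫ g β := by
        rw [← Category.assoc v w]
        rw [hfac]
        simp
      rw [← this]
      exact Sieve.downward_closed _ (Sieve.ofArrows_mk _ _ (Sigma.mk β γ)) _
    · intro α p
      obtain ⟨h', hh'⟩ := hcomp' p.1 α p.2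
      refine ⟨h', ?_⟩
      simp only [Functor.comp_map, hh', Functor.map_comp, hh, Category.assoc]
  · intro X S
    rw [Sieve.functorPushforward_comp, ← hK]
end
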